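/- arXiv:2412.19290 — 5 statements merged into one kernel-verified Lean document; each statement's English description precedes it below -/
import Mathlib

section
/- Let n ∈ ℤ₊ ∪ {∞}. If u ∈ C_φ^{(n)} and v ∈ C_φ^{(n+1)}, then the function u·(X v) belongs to C_φ^{(n)}. Equivalently, with V_φ^{(n)} := { u·X : u ∈ C_φ^{(n)} }, one has V_φ^{(n)} C_φ^{(n+1)} ⊂ C_φ^{(n)}. -/
open Real Set Filter Topology

/-- The open interval `(α, β)` of real numbers, where `α β` are extended reals. -/
def EI (α β : EReal) : Set ℝ := {x : ℝ | α < (x : EReal) ∧ (x : EReal) < β}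

/-- `u : ℝ → ℝ` (thought of as a function on `(α, β)`) extends to a continuous
function on `[α, β] ⊆ EReal`. -/
def ContExt (α β : EReal) (u : ℝ → ℝ) : Prop :=
  ∃ g : EReal → ℝ, ContinuousOn g (Set.Icc α β) ∧
    ∀ x : ℝ, x ∈ EI α β → g (x : EReal) = u x

/-- The operator `X u := φ · u′`. -/
noncomputable def Xop (φ u : ℝ → ℝ) : ℝ → ℝ := fun x => φ x * deriv u x

/-- The iterates `X^k u`. -/
noncomputable def Xiter (φ : ℝ → ℝ) : ℕ → (ℝ → ℝ) → (ℝ → ℝ)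
  | 0, u => u
  | n + 1, u => Xop φ (Xiter φ n u)

/-- The space `C_φ^{(n)}`: inductively, `C_φ^{(0)}` consists of the functions having a
continuous extension to `[α, β]`, and `u ∈ C_φ^{(n+1)}` iff `u ∈ C_φ^{(n)}`, `X^n u` is
differentiable on `(α, β)`, and `X^{n+1} u` extends to a continuous function on `[α, β]`. -/
def CN (α β : EReal) (φ : ℝ → ℝ) : ℕ → Set (ℝ → ℝ)
  | 0 => {u | ContExt α β u}
  | n + 1 => {u | u ∈ CN α β φ n ∧
      (∀ x ∈ EI α β, DifferentiableAt ℝ (Xiter φ n u) x) ∧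
      ContExt α β (Xiter φ (n + 1) u)}

/-- The space `C_φ^{(∞)} := ⋂ₙ C_φ^{(n)}`. -/
def Cinf (α β : EReal) (φ : ℝ → ℝ) : Set (ℝ → ℝ) := ⋂ n : ℕ, CN α β φ n

/-- The spaces `C_φ^{(n)}` for `n ∈ ℤ₊ ∪ {∞}`. -/
def CNE (α β : EReal) (φ : ℝ → ℝ) (n : ℕ∞) : Set (ℝ → ℝ) :=
  WithTop.recTopCoe (Cinf α β φ) (fun k => CN α β φ k) n

/-!
`X = φ · d/dx` is a derivation, so the Leibniz rule and induction on `n` show that each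
`C_φ^{(n)}` is closed under sums and products. Since `X` maps `C_φ^{(n+1)}` into
`C_φ^{(n)}`, the product `u · X v` lies in `C_φ^{(n)}`; the case `n = ∞` follows levelwise.
-/

section

variable {α β : EReal} {φ : ℝ → ℝ}

lemma isOpen_EI (α β : EReal) : IsOpen (EI α β) :=
  isOpen_Ioo.preimage continuous_coe_real_ereal

lemma ContExt.congr {f g : ℝ → ℝ} (hf : ContExt α β f) (hfg : EqOn f g (EI α β)) :
    ContExt α β g := by
  obtain ⟨F, hF, hFf⟩ := hf
  exact ⟨F, hF, fun x hx => (hFf x hx).trans (hfg hx)⟩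

lemma ContExt.comp₂ {op : ℝ → ℝ → ℝ} (hop : Continuous fun p : ℝ × ℝ => op p.1 p.2)
    {f g : ℝ → ℝ} (hf : ContExt α β f) (hg : ContExt α β g) :
    ContExt α β fun x => op (f x) (g x) := by
  obtain ⟨F, hF, hFf⟩ := hf
  obtain ⟨G, hG, hGg⟩ := hg
  refine ⟨fun y => op (F y) (G y), hop.comp_continuousOn (hF.prodMk hG), fun x hx => ?_⟩
  simp only [hFf x hx, hGg x hx]

lemma Xop_add_apply {f g : ℝ → ℝ} {x : ℝ} (hf : DifferentiableAt ℝ f x)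
    (hg : DifferentiableAt ℝ g x) :
    Xop φ (fun y => f y + g y) x = Xop φ f x + Xop φ g x := by
  simp only [Xop, deriv_fun_add hf hg]
  ring

lemma Xop_mul_apply {f g : ℝ → ℝ} {x : ℝ} (hf : DifferentiableAt ℝ f x)
    (hg : DifferentiableAt ℝ g x) :
    Xop φ (fun y => f y * g y) x = Xop φ f x * g x + f x * Xop φ g x := by
  simp only [Xop, deriv_fun_mul hf hg]
  ring

lemma Xiter_succ' (k : ℕ) (f : ℝ → ℝ) : Xiter φ (k + 1) f = Xiter φ k (Xop φ f) := by
  induction k with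
  | zero => rfl
  | succ k ih => exact congrArg (Xop φ) ih

lemma CN_antitone : Antitone (CN α β φ) :=
  antitone_nat_of_succ_le fun _ _ h => h.1

/-- The definition peels off `X` at the top; this unfolds `C_φ^{(n+1)}` from the bottom. -/
lemma mem_CN_succ_iff (n : ℕ) (f : ℝ → ℝ) :
    f ∈ CN α β φ (n + 1) ↔ ContExt α β f ∧ (∀ x ∈ EI α β, DifferentiableAt ℝ f x) ∧
      Xop φ f ∈ CN α β φ n := by
  induction n generalizing f with
  | zero => simp only [CN, mem_ofPred_eq, Xiter]
  | succ n ih =>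
    change (f ∈ CN α β φ (n + 1) ∧ _ ∧ _) ↔ _
    rw [ih f, Xiter_succ' (n + 1), Xiter_succ' n]
    change _ ↔ _ ∧ _ ∧ (Xop φ f ∈ CN α β φ n ∧ _ ∧ _)
    tauto

lemma Xop_mem_CN {n : ℕ} {f : ℝ → ℝ} (hf : f ∈ CN α β φ (n + 1)) : Xop φ f ∈ CN α β φ n :=
  ((mem_CN_succ_iff n f).1 hf).2.2

lemma mem_CN_of_eqOn {n : ℕ} {f g : ℝ → ℝ} (hf : f ∈ CN α β φ n) (hfg : EqOn f g (EI α β)) :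
    g ∈ CN α β φ n := by
  induction n generalizing f g with
  | zero => exact ContExt.congr hf hfg
  | succ n ih =>
    obtain ⟨hfc, hfd, hfX⟩ := (mem_CN_succ_iff n f).1 hf
    have hloc : ∀ x ∈ EI α β, f =ᶠ[𝓝 x] g := fun x hx =>
      hfg.eventuallyEq_of_mem ((isOpen_EI α β).mem_nhds hx)
    refine (mem_CN_succ_iff n g).2 ⟨hfc.congr hfg, fun x hx => (hloc x hx).differentiableAt_iff.1
      (hfd x hx), ih hfX fun x hx => ?_⟩
    simp only [Xop, (hloc x hx).deriv_eq]

lemma add_mem_CN {n : ℕ} {f g : ℝ → ℝ} (hf : f ∈ CN α β φ n) (hg : g ∈ CN α β φ n) :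
    (fun x => f x + g x) ∈ CN α β φ n := by
  induction n generalizing f g with
  | zero => exact ContExt.comp₂ continuous_add hf hg
  | succ n ih =>
    obtain ⟨hfc, hfd, hfX⟩ := (mem_CN_succ_iff n f).1 hf
    obtain ⟨hgc, hgd, hgX⟩ := (mem_CN_succ_iff n g).1 hg
    refine (mem_CN_succ_iff n _).2 ⟨ContExt.comp₂ continuous_add hfc hgc,
      fun x hx => (hfd x hx).add (hgd x hx), mem_CN_of_eqOn (ih hfX hgX) fun x hx => ?_⟩
    exact (Xop_add_apply (hfd x hx) (hgd x hx)).symm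

lemma mul_mem_CN {n : ℕ} {f g : ℝ → ℝ} (hf : f ∈ CN α β φ n) (hg : g ∈ CN α β φ n) :
    (fun x => f x * g x) ∈ CN α β φ n := by
  induction n generalizing f g with
  | zero => exact ContExt.comp₂ continuous_mul hf hg
  | succ n ih =>
    have hfn := CN_antitone n.le_succ hf
    have hgn := CN_antitone n.le_succ hg
    obtain ⟨hfc, hfd, hfX⟩ := (mem_CN_succ_iff n f).1 hf
    obtain ⟨hgc, hgd, hgX⟩ := (mem_CN_succ_iff n g).1 hg
    refine (mem_CN_succ_iff n _).2 ⟨ContExt.comp₂ continuous_mul hfc hgc,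
      fun x hx => (hfd x hx).mul (hgd x hx),
      mem_CN_of_eqOn (add_mem_CN (ih hfX hgn) (ih hfn hgX)) fun x hx => ?_⟩
    exact (Xop_mul_apply (hfd x hx) (hgd x hx)).symm

lemma mem_CNE_iff {n : ℕ∞} {f : ℝ → ℝ} :
    f ∈ CNE α β φ n ↔ ∀ m : ℕ, (m : ℕ∞) ≤ n → f ∈ CN α β φ m := by
  induction n using ENat.recTopCoe with
  | top =>
    change f ∈ ⋂ m : ℕ, CN α β φ m ↔ _
    simp only [mem_iInter, le_top, forall_const]
  | coe k => exact ⟨fun hf m hm => CN_antitone (Nat.cast_le.1 hm) hf, fun hf => hf k le_rfl⟩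

end

theorem Vphi_acts_on_CN_general (α β : EReal) (φ : ℝ → ℝ)
    (n : ℕ∞) (u v : ℝ → ℝ) (hu : u ∈ CNE α β φ n) (hv : v ∈ CNE α β φ (n + 1)) :
    (fun x => u x * Xop φ v x) ∈ CNE α β φ n := by
  rw [mem_CNE_iff] at hu hv ⊢
  intro m hm
  have hvm : v ∈ CN α β φ (m + 1) := hv (m + 1) (by push_cast; gcongr)
  exact mul_mem_CN (hu m hm) (Xop_mem_CN hvm)

/-- if `u ∈ C_φ^{(n)}` and `v ∈ C_φ^{(n+1)}` (for `n ∈ ℤ₊ ∪ {∞}`), then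
`u · (X v) ∈ C_φ^{(n)}`; equivalently `V_φ^{(n)} C_φ^{(n+1)} ⊆ C_φ^{(n)}` where
`V_φ^{(n)} = {u · X : u ∈ C_φ^{(n)}}`. -/
theorem Vphi_acts_on_CN (α β : EReal) (hαβ : α < β) (φ : ℝ → ℝ)
    (hφc : ContinuousOn φ (EI α β)) (hφpos : ∀ x ∈ EI α β, 0 < φ x)
    (n : ℕ∞) (u v : ℝ → ℝ) (hu : u ∈ CNE α β φ n) (hv : v ∈ CNE α β φ (n + 1)) :
    (fun x => u x * Xop φ v x) ∈ CNE α β φ n :=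
  Vphi_acts_on_CN_general α β φ n u v hu hv
end

section
/- Let α < β be real numbers, a, a′ ≥ 1 and b, b′ ≥ 0. Let φ, ψ : (α,β) → (0,∞) be continuous, smooth on (α,β), with φ(t) = (t−α)^a and ψ(t) = (t−α)^b for all t sufficiently close to α, and φ(t) = (β−t)^{a′} and ψ(t) = (β−t)^{b′} for all t sufficiently close to β. Then: (i) ψ extends continuously to [α,β] and this extension lies in C_φ^{(∞)}; (ii) φ′ extends continuously to [α,β] and this extension lies in C_φ^{(∞)}; (iii) the function C_{ψ,φ} := φψ′/ψ extends continuously to [α,β] and this extension lies in C_φ^{(∞)}. -/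
open Real Set Filter Topology

open ContDiff in
/-- Auxiliary class: smooth on `(α,β)`, and a power near each endpoint. -/
def Nice (α β : ℝ) (u : ℝ → ℝ) : Prop :=
  ContDiffOn ℝ ∞ u (Set.Ioo α β) ∧
  (∃ ε > 0, ∃ c e : ℝ, 0 ≤ e ∧ ∀ t ∈ Set.Ioo α (α + ε), u t = c * (t - α) ^ e) ∧
  (∃ ε > 0, ∃ c e : ℝ, 0 ≤ e ∧ ∀ t ∈ Set.Ioo (β - ε) β, u t = c * (β - t) ^ e)

lemma EI_coe (α β : ℝ) : EI (α : EReal) (β : EReal) = Set.Ioo α β := by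
  ext x
  simp [EI, EReal.coe_lt_coe_iff, Set.mem_Ioo]

lemma Icc_coe (α β : ℝ) (hαβ : α ≤ β) :
    Set.Icc (α : EReal) (β : EReal) = ((↑) : ℝ → EReal) '' Set.Icc α β := by
  ext y
  constructor
  · rintro ⟨h1, h2⟩
    have hb : y ≠ ⊥ := by
      intro h; rw [h] at h1; exact (not_lt.2 h1) (EReal.bot_lt_coe α)
    have ht : y ≠ ⊤ := by
      intro h; rw [h] at h2; exact (not_lt.2 h2) (EReal.coe_lt_top β)
    refine ⟨y.toReal, ⟨?_, ?_⟩, EReal.coe_toReal ht hb⟩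
    · exact EReal.coe_le_coe_iff.1 (by rw [EReal.coe_toReal ht hb]; exact h1)
    · exact EReal.coe_le_coe_iff.1 (by rw [EReal.coe_toReal ht hb]; exact h2)
  · rintro ⟨x, ⟨h1, h2⟩, rfl⟩
    exact ⟨EReal.coe_le_coe_iff.2 h1, EReal.coe_le_coe_iff.2 h2⟩

/-- Continuity of the truncated power `t ↦ c * (max (t-α) 0)^e` for `e ≥ 0`. -/
lemma cont_truncpow (c e x₀ : ℝ) (he : 0 ≤ e) (s : ℝ → ℝ) (hs : Continuous s) :
    Continuous (fun t => c * (max (s t) 0) ^ e) :=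
  continuous_const.mul ((Real.continuous_rpow_const he).comp (hs.max continuous_const))

/-- A `Nice` function extends continuously to `[α,β]`. -/
lemma contExt_of_nice {α β : ℝ} (hαβ : α < β) {u : ℝ → ℝ} (hu : Nice α β u) :
    ContExt (α : EReal) (β : EReal) u := by
  obtain ⟨husm, ⟨εα, hεα, cα, eα, heα, hmα⟩, ⟨εβ, hεβ, cβ, eβ, heβ, hmβ⟩⟩ := hu
  set δ : ℝ := min (min εα εβ) ((β - α) / 2) with hδdef
  have hδ : 0 < δ := lt_min (lt_min hεα hεβ) (by linarith)
  have hδα : δ ≤ εα := le_trans (min_le_left _ _) (min_le_left _ _)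
  have hδβ : δ ≤ εβ := le_trans (min_le_left _ _) (min_le_right _ _)
  have hδmid : α + δ ≤ β - δ := by
    have : δ ≤ (β - α) / 2 := min_le_right _ _
    linarith
  set Mα : ℝ → ℝ := fun t => cα * (max (t - α) 0) ^ eα with hMα
  set Mβ : ℝ → ℝ := fun t => cβ * (max (β - t) 0) ^ eβ with hMβ
  have hMαc : Continuous Mα :=
    cont_truncpow cα eα α heα (fun t => t - α) (continuous_id.sub continuous_const)
  have hMβc : Continuous Mβ :=
    cont_truncpow cβ eβ β heβ (fun t => β - t) (continuous_const.sub continuous_id)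
  set F : ℝ → ℝ := fun t => if t < α + δ then Mα t else if β - δ < t then Mβ t else u t
    with hF
  -- F agrees with u on (α, β)
  have hFu : ∀ t ∈ Set.Ioo α β, F t = u t := by
    intro t ht
    by_cases h1 : t < α + δ
    · have : u t = cα * (t - α) ^ eα := hmα t ⟨ht.1, lt_of_lt_of_le h1 (by linarith)⟩
      simp only [hF, if_pos h1, hMα]
      rw [this, max_eq_left (by linarith [ht.1] : (0:ℝ) ≤ t - α)]
    · by_cases h2 : β - δ < t
      · have : u t = cβ * (β - t) ^ eβ := hmβ t ⟨lt_of_le_of_lt (by linarith) h2, ht.2⟩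
        simp only [hF, if_neg h1, if_pos h2, hMβ]
        rw [this, max_eq_left (by linarith [ht.2] : (0:ℝ) ≤ β - t)]
      · simp only [hF, if_neg h1, if_neg h2]
  -- F is continuous at every point of [α, β]
  have hFc : ∀ t ∈ Set.Icc α β, ContinuousAt F t := by
    intro t ht
    by_cases h1 : t < α + δ
    · have hev : F =ᶠ[𝓝 t] Mα := by
        filter_upwards [IsOpen.mem_nhds (isOpen_lt continuous_id continuous_const) h1]
          with s hs
        simp only [hF]
        rw [if_pos (show s < α + δ from hs)]
      exact (hMαc.continuousAt).congr hev.symm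
    · by_cases h2 : β - δ < t
      · have hev : F =ᶠ[𝓝 t] Mβ := by
          filter_upwards [IsOpen.mem_nhds (isOpen_lt continuous_const continuous_id) h2]
            with s hs
          have hns : ¬ s < α + δ := not_lt.2 (le_trans hδmid (le_of_lt hs))
          simp only [hF]
          rw [if_neg hns, if_pos (show β - δ < s from hs)]
        exact (hMβc.continuousAt).congr hev.symm
      · have htIoo : t ∈ Set.Ioo α β := ⟨by linarith [not_lt.1 h1], by linarith [not_lt.1 h2]⟩
        have huc : ContinuousAt u t :=
          (husm.continuousOn.continuousWithinAt htIoo).continuousAt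
            (isOpen_Ioo.mem_nhds htIoo)
        have hev : F =ᶠ[𝓝 t] u := by
          filter_upwards [isOpen_Ioo.mem_nhds htIoo] with s hs
          exact hFu s hs
        exact huc.congr hev.symm
  -- transfer to EReal
  refine ⟨fun y => F y.toReal, ?_, ?_⟩
  · rw [Icc_coe α β (le_of_lt hαβ)]
    rintro _ ⟨x, hx, rfl⟩
    rw [ContinuousWithinAt, ← Icc_coe α β (le_of_lt hαβ)]
    rw [Icc_coe α β (le_of_lt hαβ), ← EReal.isEmbedding_coe.map_nhdsWithin_eq]
    rw [Filter.tendsto_map'_iff]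
    have : ((fun y : EReal => F y.toReal) ∘ ((↑) : ℝ → EReal)) = F := by
      funext s; simp
    rw [this]
    have : F ((x : EReal)).toReal = F x := by norm_num
    rw [this]
    exact (hFc x hx).continuousWithinAt
  · intro x hx
    rw [EI_coe] at hx
    have hxx : (fun y : EReal => F y.toReal) (x : EReal) = F x := by norm_num
    rw [hxx]
    exact hFu x hx

open ContDiff in
lemma nice_diff {α β : ℝ} {u : ℝ → ℝ} (hu : Nice α β u) :
    ∀ x ∈ Set.Ioo α β, DifferentiableAt ℝ u x := by
  intro x hx
  have := (hu.1.differentiableOn (by simp)).differentiableAt (isOpen_Ioo.mem_nhds hx)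
  exact this

/-- derivative near the left endpoint -/
lemma deriv_near_left {α : ℝ} {u : ℝ → ℝ} {ε c e : ℝ} (hε : 0 < ε)
    (h : ∀ t ∈ Set.Ioo α (α + ε), u t = c * (t - α) ^ e) :
    ∀ t ∈ Set.Ioo α (α + ε), deriv u t = c * e * (t - α) ^ (e - 1) := by
  intro t ht
  have hpos : 0 < t - α := by linarith [ht.1]
  have hev : u =ᶠ[𝓝 t] fun s => c * (s - α) ^ e := by
    filter_upwards [isOpen_Ioo.mem_nhds ht] with s hs
    exact h s hs
  rw [hev.deriv_eq]
  have hd : HasDerivAt (fun s : ℝ => (s - α) ^ e) (e * (t - α) ^ (e - 1) * 1) t :=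
    (Real.hasDerivAt_rpow_const (Or.inl (ne_of_gt hpos))).comp (h := fun s : ℝ => s - α) t
      ((hasDerivAt_id' t).sub_const α)
  have := (hd.const_mul c).deriv
  rw [this]; ring

/-- derivative near the right endpoint -/
lemma deriv_near_right {β : ℝ} {u : ℝ → ℝ} {ε c e : ℝ} (hε : 0 < ε)
    (h : ∀ t ∈ Set.Ioo (β - ε) β, u t = c * (β - t) ^ e) :
    ∀ t ∈ Set.Ioo (β - ε) β, deriv u t = -(c * e) * (β - t) ^ (e - 1) := by
  intro t ht
  have hpos : 0 < β - t := by linarith [ht.2]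
  have hev : u =ᶠ[𝓝 t] fun s => c * (β - s) ^ e := by
    filter_upwards [isOpen_Ioo.mem_nhds ht] with s hs
    exact h s hs
  rw [hev.deriv_eq]
  have hd : HasDerivAt (fun s : ℝ => (β - s) ^ e) (e * (β - t) ^ (e - 1) * (-1)) t :=
    (Real.hasDerivAt_rpow_const (Or.inl (ne_of_gt hpos))).comp t
      ((hasDerivAt_id t).const_sub β)
  have := (hd.const_mul c).deriv
  rw [this]; ring

open ContDiff in
/-- The class `Nice` is stable under `Xop φ`. -/
lemma nice_Xop {α β a a' : ℝ} {φ : ℝ → ℝ} (ha : 1 ≤ a) (ha' : 1 ≤ a')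
    (hφs : ContDiffOn ℝ ∞ φ (Set.Ioo α β))
    (hφα : ∃ ε > 0, ∀ t ∈ Set.Ioo α (α + ε), φ t = (t - α) ^ a)
    (hφβ : ∃ ε > 0, ∀ t ∈ Set.Ioo (β - ε) β, φ t = (β - t) ^ a')
    {u : ℝ → ℝ} (hu : Nice α β u) : Nice α β (Xop φ u) := by
  obtain ⟨husm, ⟨εα, hεα, c, e, he, hmα⟩, ⟨εβ, hεβ, c', e', he', hmβ⟩⟩ := hu
  obtain ⟨ε₁, hε₁, hφ₁⟩ := hφα
  obtain ⟨ε₂, hε₂, hφ₂⟩ := hφβ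
  refine ⟨?_, ?_, ?_⟩
  · exact hφs.mul (husm.deriv_of_isOpen isOpen_Ioo (by simp))
  · refine ⟨min εα ε₁, lt_min hεα hε₁, c * e, a + e - 1, by linarith, ?_⟩
    intro t ht
    have hm1 : min εα ε₁ ≤ εα := min_le_left _ _
    have hm2 : min εα ε₁ ≤ ε₁ := min_le_right _ _
    have ht1 : t ∈ Set.Ioo α (α + εα) := ⟨ht.1, by linarith [ht.2]⟩
    have ht2 : t ∈ Set.Ioo α (α + ε₁) := ⟨ht.1, by linarith [ht.2]⟩
    have hpos : 0 < t - α := by linarith [ht.1]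
    rw [Xop, hφ₁ t ht2, deriv_near_left hεα hmα t ht1]
    rw [show a + e - 1 = a + (e - 1) by ring, Real.rpow_add hpos]
    ring
  · refine ⟨min εβ ε₂, lt_min hεβ hε₂, -(c' * e'), a' + e' - 1, by linarith, ?_⟩
    intro t ht
    have hm1 : min εβ ε₂ ≤ εβ := min_le_left _ _
    have hm2 : min εβ ε₂ ≤ ε₂ := min_le_right _ _
    have ht1 : t ∈ Set.Ioo (β - εβ) β := ⟨by linarith [ht.1], ht.2⟩
    have ht2 : t ∈ Set.Ioo (β - ε₂) β := ⟨by linarith [ht.1], ht.2⟩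
    have hpos : 0 < β - t := by linarith [ht.2]
    rw [Xop, hφ₂ t ht2, deriv_near_right hεβ hmβ t ht1]
    rw [show a' + e' - 1 = a' + (e' - 1) by ring, Real.rpow_add hpos]
    ring

open ContDiff in
/-- A `Nice` function belongs to `C_φ^{(∞)}`. -/
lemma nice_mem_Cinf {α β a a' : ℝ} {φ : ℝ → ℝ} (hαβ : α < β) (ha : 1 ≤ a) (ha' : 1 ≤ a')
    (hφs : ContDiffOn ℝ ∞ φ (Set.Ioo α β))
    (hφα : ∃ ε > 0, ∀ t ∈ Set.Ioo α (α + ε), φ t = (t - α) ^ a)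
    (hφβ : ∃ ε > 0, ∀ t ∈ Set.Ioo (β - ε) β, φ t = (β - t) ^ a')
    {u : ℝ → ℝ} (hu : Nice α β u) : u ∈ Cinf (α : EReal) (β : EReal) φ := by
  have key : ∀ n, Nice α β (Xiter φ n u) := by
    intro n
    induction n with
    | zero => exact hu
    | succ n ih => exact nice_Xop ha ha' hφs hφα hφβ ih
  have main : ∀ n, u ∈ CN (α : EReal) (β : EReal) φ n := by
    intro n
    induction n with
    | zero => exact contExt_of_nice hαβ hu
    | succ n ih =>
      refine ⟨ih, ?_, contExt_of_nice hαβ (key (n + 1))⟩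
      intro x hx
      rw [EI_coe] at hx
      exact nice_diff (key n) x hx
  exact Set.mem_iInter.2 main

/-- for real `α < β`, `a, a′ ≥ 1`, `b, b′ ≥ 0`, and `φ, ψ` positive and
smooth on `(α,β)` with `φ(t) = (t−α)^a`, `ψ(t) = (t−α)^b` near `α` and
`φ(t) = (β−t)^{a′}`, `ψ(t) = (β−t)^{b′}` near `β`, the functions `ψ`, `φ′` and
`C_{ψ,φ} := φψ′/ψ` all extend continuously to `[α,β]` and the extensions lie in
`C_φ^{(∞)}`. -/
theorem powerlaw_mem_Cinf (α β : ℝ) (hαβ : α < β)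
    (a a' b b' : ℝ) (ha : 1 ≤ a) (ha' : 1 ≤ a') (hb : 0 ≤ b) (hb' : 0 ≤ b')
    (φ ψ : ℝ → ℝ)
    (hφs : ContDiffOn ℝ (⊤ : ℕ∞) φ (Set.Ioo α β)) (hψs : ContDiffOn ℝ (⊤ : ℕ∞) ψ (Set.Ioo α β))
    (hφpos : ∀ t ∈ Set.Ioo α β, 0 < φ t) (hψpos : ∀ t ∈ Set.Ioo α β, 0 < ψ t)
    (hα : ∃ ε > 0, ∀ t ∈ Set.Ioo α (α + ε),
      φ t = (t - α) ^ a ∧ ψ t = (t - α) ^ b)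
    (hβ : ∃ ε > 0, ∀ t ∈ Set.Ioo (β - ε) β,
      φ t = (β - t) ^ a' ∧ ψ t = (β - t) ^ b') :
    ψ ∈ Cinf (α : EReal) (β : EReal) φ ∧
      deriv φ ∈ Cinf (α : EReal) (β : EReal) φ ∧
      (fun t => φ t * deriv ψ t / ψ t) ∈ Cinf (α : EReal) (β : EReal) φ := by
  open ContDiff in
  obtain ⟨ε₁, hε₁, h₁⟩ := hα
  obtain ⟨ε₂, hε₂, h₂⟩ := hβ
  have hφs' : ContDiffOn ℝ ∞ φ (Set.Ioo α β) := hφs.of_le (by simp)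
  have hψs' : ContDiffOn ℝ ∞ ψ (Set.Ioo α β) := hψs.of_le (by simp)
  have hφα : ∃ ε > 0, ∀ t ∈ Set.Ioo α (α + ε), φ t = (t - α) ^ a :=
    ⟨ε₁, hε₁, fun t ht => (h₁ t ht).1⟩
  have hφβ : ∃ ε > 0, ∀ t ∈ Set.Ioo (β - ε) β, φ t = (β - t) ^ a' :=
    ⟨ε₂, hε₂, fun t ht => (h₂ t ht).1⟩
  have hψα : ∀ t ∈ Set.Ioo α (α + ε₁), ψ t = 1 * (t - α) ^ b := by
    intro t ht; rw [one_mul]; exact (h₁ t ht).2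
  have hψβ : ∀ t ∈ Set.Ioo (β - ε₂) β, ψ t = 1 * (β - t) ^ b' := by
    intro t ht; rw [one_mul]; exact (h₂ t ht).2
  have hφα' : ∀ t ∈ Set.Ioo α (α + ε₁), φ t = 1 * (t - α) ^ a := by
    intro t ht; rw [one_mul]; exact (h₁ t ht).1
  have hφβ' : ∀ t ∈ Set.Ioo (β - ε₂) β, φ t = 1 * (β - t) ^ a' := by
    intro t ht; rw [one_mul]; exact (h₂ t ht).1
  refine ⟨?_, ?_, ?_⟩
  · -- ψ is Nice
    refine nice_mem_Cinf hαβ ha ha' hφs' hφα hφβ ⟨hψs', ?_, ?_⟩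
    · exact ⟨ε₁, hε₁, 1, b, hb, hψα⟩
    · exact ⟨ε₂, hε₂, 1, b', hb', hψβ⟩
  · -- deriv φ is Nice
    refine nice_mem_Cinf hαβ ha ha' hφs' hφα hφβ
      ⟨hφs'.deriv_of_isOpen isOpen_Ioo (by simp), ?_, ?_⟩
    · refine ⟨ε₁, hε₁, a, a - 1, by linarith, ?_⟩
      intro t ht
      have := deriv_near_left hε₁ hφα' t ht
      rw [this]; ring_nf
    · refine ⟨ε₂, hε₂, -a', a' - 1, by linarith, ?_⟩
      intro t ht
      have := deriv_near_right hε₂ hφβ' t ht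
      rw [this]; ring_nf
  · -- C function is Nice
    refine nice_mem_Cinf hαβ ha ha' hφs' hφα hφβ ⟨?_, ?_, ?_⟩
    · exact (hφs'.mul (hψs'.deriv_of_isOpen isOpen_Ioo (by simp))).div hψs'
        (fun x hx => ne_of_gt (hψpos x hx))
    · refine ⟨ε₁, hε₁, b, a - 1, by linarith, ?_⟩
      intro t ht
      have hpos : 0 < t - α := by linarith [ht.1]
      show φ t * deriv ψ t / ψ t = b * (t - α) ^ (a - 1)
      rw [deriv_near_left hε₁ hψα t ht, (h₁ t ht).1, (h₁ t ht).2]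
      rw [div_eq_iff (ne_of_gt (Real.rpow_pos_of_pos hpos b))]
      have h : (t - α) ^ a * (t - α) ^ (b - 1) = (t - α) ^ (a - 1) * (t - α) ^ b := by
        rw [← Real.rpow_add hpos, ← Real.rpow_add hpos, show a + (b - 1) = a - 1 + b by ring]
      linear_combination b * h
    · refine ⟨ε₂, hε₂, -b', a' - 1, by linarith, ?_⟩
      intro t ht
      have hpos : 0 < β - t := by linarith [ht.2]
      show φ t * deriv ψ t / ψ t = -b' * (β - t) ^ (a' - 1)
      rw [deriv_near_right hε₂ hψβ t ht, (h₂ t ht).1, (h₂ t ht).2]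
      rw [div_eq_iff (ne_of_gt (Real.rpow_pos_of_pos hpos b'))]
      have h : (β - t) ^ a' * (β - t) ^ (b' - 1) = (β - t) ^ (a' - 1) * (β - t) ^ b' := by
        rw [← Real.rpow_add hpos, ← Real.rpow_add hpos, show a' + (b' - 1) = a' - 1 + b' by ring]
      linear_combination (-b') * h
end

section
/- Let φ : (α,β) → (0,∞) be continuous (no Lipschitz condition assumed) and γ ∈ (α,β). If y and ỹ are two differentiable functions from a real interval I containing 0 into (α,β) satisfying y′(s) = φ(y(s)) and ỹ′(s) = φ(ỹ(s)) for all s ∈ I, with y(0) = ỹ(0) = γ, then y = ỹ on I. In other words, the Cauchy problem y′ = φ(y), y(0) = γ has at most one solution. -/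
open Real Set Filter Topology

/-- uniqueness for the Cauchy problem `y′ = φ(y)`, `y(0) = γ`, for a
continuous positive `φ : (α,β) → (0,∞)` (no Lipschitz condition): two solutions
defined on a real interval `s` containing `0` must coincide on `s`. -/
theorem cauchy_uniqueness (α β : EReal) (hαβ : α < β) (φ : ℝ → ℝ)
    (hφc : ContinuousOn φ (EI α β)) (hφpos : ∀ x ∈ EI α β, 0 < φ x)
    (γ : ℝ) (hγ : γ ∈ EI α β)
    (s : Set ℝ) (hs : s.OrdConnected) (h0 : (0 : ℝ) ∈ s)
    (y z : ℝ → ℝ)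
    (hy : ∀ t ∈ s, y t ∈ EI α β) (hz : ∀ t ∈ s, z t ∈ EI α β)
    (hy' : ∀ t ∈ s, HasDerivWithinAt y (φ (y t)) s t)
    (hz' : ∀ t ∈ s, HasDerivWithinAt z (φ (z t)) s t)
    (hy0 : y 0 = γ) (hz0 : z 0 = γ) :
    Set.EqOn y z s := by
  -- EI is open
  have hEIopen : IsOpen (EI α β) := by
    have : EI α β = (fun x : ℝ => (x : EReal)) ⁻¹' (Set.Ioo α β) := rfl
    rw [this]
    exact (isOpen_Ioo).preimage continuous_coe_real_ereal
  have hEIord : (EI α β).OrdConnected := by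
    constructor
    intro a ha b hb x hx
    exact ⟨lt_of_lt_of_le ha.1 (by exact_mod_cast hx.1),
      lt_of_le_of_lt (by exact_mod_cast hx.2 : (x : EReal) ≤ b) hb.2⟩
  have hEIconv : Convex ℝ (EI α β) := convex_iff_ordConnected.mpr hEIord
  have hsconv : Convex ℝ s := convex_iff_ordConnected.mpr hs
  -- the inverse of φ is continuous on EI
  have hinvc : ContinuousOn (fun u => (φ u)⁻¹) (EI α β) :=
    hφc.inv₀ fun x hx => (hφpos x hx).ne'
  -- the primitive F
  set F : ℝ → ℝ := fun x => ∫ u in γ..x, (φ u)⁻¹ with hFdef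
  have hF : ∀ x ∈ EI α β, HasDerivAt F (φ x)⁻¹ x := by
    intro x hx
    have hsub : Set.uIcc γ x ⊆ EI α β := hEIord.uIcc_subset hγ hx
    have hint : IntervalIntegrable (fun u => (φ u)⁻¹) MeasureTheory.volume γ x :=
      (hinvc.mono hsub).intervalIntegrable
    have hmeas : StronglyMeasurableAtFilter (fun u => (φ u)⁻¹) (𝓝 x) :=
      hinvc.stronglyMeasurableAtFilter hEIopen _ hx
    have hcont : ContinuousAt (fun u => (φ u)⁻¹) x :=
      hinvc.continuousAt (hEIopen.mem_nhds hx)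
    exact intervalIntegral.integral_hasDerivAt_right hint hmeas hcont
  -- F is strictly monotone on EI
  have hFmono : StrictMonoOn F (EI α β) := by
    apply strictMonoOn_of_hasDerivWithinAt_pos hEIconv
    · intro x hx
      exact (hF x hx).continuousAt.continuousWithinAt
    · intro x hx
      rw [hEIopen.interior_eq] at hx
      exact (hF x hx).hasDerivWithinAt
    · intro x hx
      rw [hEIopen.interior_eq] at hx
      exact inv_pos.mpr (hφpos x hx)
  -- g t = F (y t) - F (z t) has derivative 0 on s
  have hg : ∀ t ∈ s, HasDerivWithinAt (fun t => F (y t) - F (z t)) 0 s t := by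
    intro t ht
    have h1 : HasDerivWithinAt (fun t => F (y t)) ((φ (y t))⁻¹ * φ (y t)) s t :=
      (hF (y t) (hy t ht)).comp_hasDerivWithinAt t (hy' t ht)
    have h2 : HasDerivWithinAt (fun t => F (z t)) ((φ (z t))⁻¹ * φ (z t)) s t :=
      (hF (z t) (hz t ht)).comp_hasDerivWithinAt t (hz' t ht)
    have e1 : (φ (y t))⁻¹ * φ (y t) = 1 := inv_mul_cancel₀ (hφpos _ (hy t ht)).ne'
    have e2 : (φ (z t))⁻¹ * φ (z t) = 1 := inv_mul_cancel₀ (hφpos _ (hz t ht)).ne'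
    have := h1.sub h2
    rw [e1, e2, sub_self] at this
    exact this
  intro t ht
  have key : ‖(F (y t) - F (z t)) - (F (y 0) - F (z 0))‖ ≤ 0 * ‖t - 0‖ :=
    hsconv.norm_image_sub_le_of_norm_hasDerivWithin_le (f' := fun _ => 0) hg
      (fun x hx => by simp) h0 ht
  rw [hy0, hz0, sub_self, sub_zero, zero_mul, norm_le_zero_iff, sub_eq_zero] at key
  exact hFmono.injOn (hy t ht) (hz t ht) key
end

section
/- Fix a real number a > 1 and s < 0, and define f : [0,∞) → ℝ by f(x) := x·(1 − (a−1)·s·x^{a−1})^{1/(1−a)} for x > 0 and f(0) := 0 (note 1 − (a−1)·s·x^{a−1} > 0 for all x ≥ 0 since s < 0). Then f extends to a C^∞ function on a neighbourhood of 0 in ℝ if and only if a is an integer. -/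
open Real Set Filter Topology


lemma rpow_tendsto_zero' {c : ℝ} (hc : 0 < c) :
    Tendsto (fun x : ℝ => x ^ c) (𝓝[>] (0:ℝ)) (𝓝 0) := by
  have h := (Real.continuousAt_rpow_const 0 c (Or.inr (le_of_lt hc))).tendsto
  rw [Real.zero_rpow (ne_of_gt hc)] at h
  exact h.mono_left nhdsWithin_le_nhds

lemma poly_not_tendsto (N : ℕ) (d : ℕ → ℝ) (a s : ℝ)
    (h1 : (N : ℝ) - 1 < a) (h2 : a < N) (hs : s ≠ 0)
    (hT : Tendsto (fun x => (∑ k ∈ Finset.range (N + 1), d k * x ^ k) / x ^ a)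
      (𝓝[>] (0:ℝ)) (𝓝 s)) : False := by
  set F : ℝ → ℝ := fun x => ∑ k ∈ Finset.range (N + 1), d k * x ^ k with hF
  have split : ∀ j, j ≤ N → (∀ i, i < j → d i = 0) → ∀ x : ℝ,
      F x = x ^ j * ∑ k ∈ Finset.range (N + 1 - j), d (j + k) * x ^ k := by
    intro j hj hd x
    simp only [hF, Finset.mul_sum]
    rw [← Finset.sum_range_add_sum_Ico _ (by omega : j ≤ N + 1)]
    have hz : (∑ k ∈ Finset.range j, d k * x ^ k) = 0 :=
      Finset.sum_eq_zero fun i hi => by rw [hd i (Finset.mem_range.mp hi)]; ring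
    rw [hz, zero_add, Finset.sum_Ico_eq_sum_range]
    exact Finset.sum_congr rfl fun k _ => by rw [pow_add]; ring
  have tail0 : ∀ j, j ≤ N → (∑ k ∈ Finset.range (N + 1 - j), d (j + k) * (0:ℝ) ^ k) = d j := by
    intro j hj
    rw [Finset.sum_eq_single 0]
    · simp
    · intro b _ hb; simp [zero_pow hb]
    · intro h; exact absurd (Finset.mem_range.mpr (by omega)) h
  -- quotient identity
  have quot : ∀ j, j ≤ N → (∀ i, i < j → d i = 0) →
      Tendsto (fun x : ℝ => ∑ k ∈ Finset.range (N + 1 - j), d (j + k) * x ^ k)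
        (𝓝[>] (0:ℝ)) (𝓝 (s * 0 ^ ((a : ℝ) - j))) ∨ True := fun _ _ _ => Or.inr trivial
  have key : ∀ j, j ≤ N → (∀ i, i < j → d i = 0) → ((j:ℝ) < a) → d j = 0 := by
    intro j hj hd hja
    have hcont : Tendsto (fun x : ℝ => ∑ k ∈ Finset.range (N + 1 - j), d (j + k) * x ^ k)
        (𝓝[>] (0:ℝ)) (𝓝 (d j)) := by
      have hc : Continuous (fun x : ℝ => ∑ k ∈ Finset.range (N + 1 - j), d (j + k) * x ^ k) := by
        continuity
      exact (tail0 j hj) ▸ (hc.tendsto 0).mono_left nhdsWithin_le_nhds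
    have halt : Tendsto (fun x : ℝ => ∑ k ∈ Finset.range (N + 1 - j), d (j + k) * x ^ k)
        (𝓝[>] (0:ℝ)) (𝓝 0) := by
      have hlim : Tendsto (fun x : ℝ => (F x / x ^ a) * x ^ (a - (j:ℝ)))
          (𝓝[>] (0:ℝ)) (𝓝 (s * 0)) :=
        hT.mul (rpow_tendsto_zero' (by linarith))
      rw [mul_zero] at hlim
      refine hlim.congr' ?_
      filter_upwards [self_mem_nhdsWithin] with x (hx : 0 < x)
      have hxa : x ^ a ≠ 0 := ne_of_gt (Real.rpow_pos_of_pos hx a)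
      have hxj : (x:ℝ) ^ j ≠ 0 := pow_ne_zero j (ne_of_gt hx)
      have hsub : x ^ (a - (j:ℝ)) = x ^ a / x ^ j := by
        rw [Real.rpow_sub hx, Real.rpow_natCast]
      rw [hsub, split j hj hd x]
      field_simp
      try ring
    exact tendsto_nhds_unique hcont halt
  have keyN : ∀ j, j < N → d j = 0 := by
    intro j
    induction j using Nat.strong_induction_on with
    | _ j ih =>
      intro hjN
      refine key j (le_of_lt hjN) (fun i hi => ih i hi (lt_trans hi hjN)) ?_
      have : (j : ℝ) + 1 ≤ (N : ℝ) := by exact_mod_cast hjN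
      linarith
  -- now F x = x^N * d N, so F x / x^a = d N * x^(N - a) → 0, contradiction
  have hsplitN : ∀ x : ℝ, F x = x ^ N * d N := by
    intro x
    rw [split N le_rfl keyN x]
    congr 1
    simp
  have hfinal : Tendsto (fun x : ℝ => F x / x ^ a) (𝓝[>] (0:ℝ)) (𝓝 0) := by
    have hlim : Tendsto (fun x : ℝ => d N * x ^ ((N:ℝ) - a)) (𝓝[>] (0:ℝ)) (𝓝 (d N * 0)) :=
      (rpow_tendsto_zero' (by linarith)).const_mul _
    rw [mul_zero] at hlim
    refine hlim.congr' ?_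
    filter_upwards [self_mem_nhdsWithin] with x (hx : 0 < x)
    have hxa : x ^ a ≠ 0 := ne_of_gt (Real.rpow_pos_of_pos hx a)
    have hsub : x ^ ((N:ℝ) - a) = x ^ (N:ℕ) / x ^ a := by
      rw [Real.rpow_sub hx, Real.rpow_natCast]
    rw [hsub, hsplitN x]
    field_simp
    try ring
  exact hs (tendsto_nhds_unique hT hfinal)



-- step 1 : the basic limit
lemma flim (a s : ℝ) (ha : 1 < a) (hs : s < 0) (f : ℝ → ℝ)
    (hf : ∀ x : ℝ, 0 < x →
      f x = x * (1 - (a - 1) * s * x ^ (a - 1)) ^ (1 / (1 - a))) :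
    Tendsto (fun x => (f x - x) / x ^ a) (𝓝[>] (0:ℝ)) (𝓝 s) := by
  set b : ℝ := a - 1 with hbdef
  set c : ℝ := (a - 1) * (-s) with hcdef
  set p : ℝ := 1 / (1 - a) with hpdef
  have hb : 0 < b := by simp [hbdef]; linarith
  have hc : 0 < c := by
    apply mul_pos (by linarith) (by linarith)
  -- derivative of (1+u)^p at 0 is p
  have hD : HasDerivAt (fun u : ℝ => (1 + u) ^ p) p 0 := by
    have h1 : HasDerivAt (fun y : ℝ => y ^ p) (p * (1:ℝ) ^ (p - 1)) 1 :=
      Real.hasDerivAt_rpow_const (Or.inl one_ne_zero)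
    have h2 : HasDerivAt (fun u : ℝ => 1 + u) 1 0 := by
      simpa using (hasDerivAt_id (0:ℝ)).const_add 1
    have h1' : HasDerivAt (fun y : ℝ => y ^ p) (p * (1:ℝ) ^ (p - 1)) (1 + 0) := by
      simpa using h1
    have h3 := h1'.comp 0 h2
    simp only [Real.one_rpow, mul_one] at h3
    exact h3
  rw [hasDerivAt_iff_tendsto_slope] at hD
  have L1 : Tendsto (fun u : ℝ => ((1 + u) ^ p - 1) / u) (𝓝[≠] (0:ℝ)) (𝓝 p) := by
    refine hD.congr' ?_
    filter_upwards with u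
    simp [slope_def_field, Real.one_rpow]
  have L2 : Tendsto (fun x : ℝ => c * x ^ b) (𝓝[>] (0:ℝ)) (𝓝[≠] (0:ℝ)) := by
    apply tendsto_nhdsWithin_of_tendsto_nhds_of_eventually_within
    · have := (rpow_tendsto_zero' hb).const_mul c
      simpa using this
    · filter_upwards [self_mem_nhdsWithin] with x (hx : 0 < x)
      exact ne_of_gt (mul_pos hc (Real.rpow_pos_of_pos hx b))
  have L3 : Tendsto (fun x : ℝ => c * (((1 + c * x ^ b) ^ p - 1) / (c * x ^ b)))
      (𝓝[>] (0:ℝ)) (𝓝 (c * p)) := (L1.comp L2).const_mul c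
  have hcp : c * p = s := by
    have h1a : 1 - a ≠ 0 := by linarith
    rw [hcdef, hpdef]
    field_simp
    ring
  rw [hcp] at L3
  refine L3.congr' ?_
  filter_upwards [self_mem_nhdsWithin] with x (hx : 0 < x)
  have hxb : (0:ℝ) < x ^ b := Real.rpow_pos_of_pos hx b
  have hxa : x ^ a = x * x ^ b := by
    conv_lhs => rw [show a = 1 + b by rw [hbdef]; ring]
    rw [Real.rpow_add hx, Real.rpow_one]
  have hbase : 1 - (a - 1) * s * x ^ (a - 1) = 1 + c * x ^ b := by
    rw [hcdef, hbdef]; ring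
  rw [hf x hx, hbase, hxa]
  field_simp

/-- for a real `a > 1` and `s < 0`, the function
`f(x) = x·(1 − (a−1)·s·x^{a−1})^{1/(1−a)}` for `x > 0`, `f(0) = 0`, extends to a `C^∞`
function on a neighbourhood of `0` in `ℝ` (agreeing with `f` on the intersection with
`[0,∞)`) if and only if `a` is an integer. -/
theorem smooth_at_zero_iff_integer (a s : ℝ) (ha : 1 < a) (hs : s < 0)
    (f : ℝ → ℝ)
    (hf : ∀ x : ℝ, 0 < x →
      f x = x * (1 - (a - 1) * s * x ^ (a - 1)) ^ (1 / (1 - a)))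
    (hf0 : f 0 = 0) :
    (∃ U : Set ℝ, IsOpen U ∧ (0 : ℝ) ∈ U ∧
        ∃ g : ℝ → ℝ, ContDiffOn ℝ (⊤ : ℕ∞) g U ∧ Set.EqOn g f (U ∩ Set.Ici 0)) ↔
      ∃ m : ℤ, a = (m : ℝ) := by
  constructor
  · intro h
    obtain ⟨U, hUopen, h0U, g, hg, hEq⟩ := h
    by_contra hni
    push_neg at hni
    set N : ℕ := ⌈a⌉₊ with hN
    have haN : a < N := by
      rcases lt_or_eq_of_le (Nat.le_ceil a) with h' | h'
      · exact h'
      · exact absurd (h' ▸ rfl : a = ((N : ℤ) : ℝ)) (by exact_mod_cast hni (N : ℤ))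
    have hNa : (N : ℝ) - 1 < a := by
      have := Nat.ceil_lt_add_one (le_of_lt (lt_trans zero_lt_one ha))
      rw [← hN] at this
      linarith
    have hN2 : 2 ≤ N := by
      have : 1 < N := Nat.lt_ceil.mpr (by exact_mod_cast ha)
      omega
    -- choose a small closed interval inside U
    obtain ⟨ε, hε, hball⟩ := Metric.isOpen_iff.mp hUopen 0 h0U
    set ε' : ℝ := ε / 2 with hε'def
    have hε' : 0 < ε' := by positivity
    have hsub : Icc (0:ℝ) ε' ⊆ U := by
      intro x hx
      apply hball
      rw [Metric.mem_ball, Real.dist_eq, sub_zero]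
      rw [abs_of_nonneg hx.1]
      calc x ≤ ε' := hx.2
      _ < ε := by rw [hε'def]; linarith
    have hg' : ContDiffOn ℝ (N + 1 : ℕ) g (Icc 0 ε') := (hg.mono hsub).of_le (by exact_mod_cast le_top)
    obtain ⟨C, hC⟩ := exists_taylor_mean_remainder_bound (le_of_lt hε') hg'
    set P : ℝ → ℝ := fun x => taylorWithinEval g N (Icc 0 ε') 0 x with hP
    set D : ℕ → ℝ := fun k => iteratedDerivWithin k g (Icc 0 ε') 0 with hD
    have hPsum : ∀ x, P x = ∑ k ∈ Finset.range (N + 1), (D k / k.factorial) * x ^ k := by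
      intro x
      show taylorWithinEval g N (Icc 0 ε') 0 x = _
      rw [taylor_within_apply]
      apply Finset.sum_congr rfl
      intro k _
      simp only [smul_eq_mul, sub_zero, hD]
      ring
    set d : ℕ → ℝ := fun k => if k = 1 then D 1 / (1:ℕ).factorial - 1 else D k / k.factorial
      with hd
    have hdsum : ∀ x, (∑ k ∈ Finset.range (N + 1), d k * x ^ k) = P x - x := by
      intro x
      have hpt : ∀ k ∈ Finset.range (N + 1),
          d k * x ^ k = (D k / k.factorial) * x ^ k + (if k = 1 then -x else 0) := by
        intro k _
        by_cases hk : k = 1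
        · subst hk
          simp only [hd, if_pos rfl]
          norm_num
          ring
        · simp [hd, hk]
      rw [Finset.sum_congr rfl hpt, Finset.sum_add_distrib,
        Finset.sum_ite_eq' (Finset.range (N + 1)) 1 (fun _ => -x)]
      rw [hPsum x, if_pos (Finset.mem_range.mpr (by omega))]
      ring
    -- (g - P)/x^a tendsto 0
    have h2lim : Tendsto (fun x => (g x - P x) / x ^ a) (𝓝[>] (0:ℝ)) (𝓝 0) := by
      have hbound : Tendsto (fun x : ℝ => C * x ^ ((N:ℝ) + 1 - a)) (𝓝[>] (0:ℝ)) (𝓝 (C * 0)) :=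
        (rpow_tendsto_zero' (by push_cast; linarith)).const_mul C
      rw [mul_zero] at hbound
      apply squeeze_zero_norm' _ hbound
      filter_upwards [Ioc_mem_nhdsGT_of_mem ⟨le_refl (0:ℝ), hε'⟩] with x hx
      have hx0 : 0 < x := hx.1
      have hxa : (0:ℝ) < x ^ a := Real.rpow_pos_of_pos hx0 a
      have hxmem : x ∈ Icc (0:ℝ) ε' := ⟨le_of_lt hx0, hx.2⟩
      have hb := hC x hxmem
      rw [sub_zero] at hb
      have hCnn : 0 ≤ C * x ^ (N + 1) := le_trans (norm_nonneg _) hb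
      rw [Real.norm_eq_abs, abs_div, abs_of_pos hxa, div_le_iff₀ hxa]
      calc |g x - P x| ≤ C * x ^ (N + 1) := hb
      _ = C * x ^ ((N:ℝ) + 1 - a) * x ^ a := by
          rw [mul_assoc, ← Real.rpow_add hx0, ← Real.rpow_natCast x (N + 1)]
          congr 2
          push_cast
          ring
    -- combine
    have hT : Tendsto (fun x => (∑ k ∈ Finset.range (N + 1), d k * x ^ k) / x ^ a)
        (𝓝[>] (0:ℝ)) (𝓝 s) := by
      have := (flim a s ha hs f hf).sub h2lim
      rw [sub_zero] at this
      refine this.congr' ?_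
      filter_upwards [Ioc_mem_nhdsGT_of_mem ⟨le_refl (0:ℝ), hε'⟩] with x hx
      have hgf : g x = f x := hEq ⟨hsub ⟨le_of_lt hx.1, hx.2⟩, le_of_lt hx.1⟩
      rw [div_sub_div_same, hdsum x, hgf]
      ring_nf
    exact poly_not_tendsto N d a s hNa haN (ne_of_lt hs) hT
  · rintro ⟨m, hm⟩
    have hm2 : 2 ≤ m := by
      by_contra h
      push_neg at h
      have h1 : m ≤ 1 := by omega
      have : (m : ℝ) ≤ 1 := by exact_mod_cast h1
      rw [hm] at ha; linarith
    set k : ℕ := (m - 1).toNat with hk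
    have hk1 : 1 ≤ k := by omega
    have hka : (k : ℝ) = a - 1 := by
      rw [hm]
      have : ((m - 1).toNat : ℤ) = m - 1 := Int.toNat_of_nonneg (by omega)
      exact_mod_cast this
    set u : ℝ → ℝ := fun x => 1 - (a - 1) * s * x ^ k with hu
    have hucd : ContDiff ℝ (⊤ : ℕ∞) u := by
      apply ContDiff.sub contDiff_const
      exact (contDiff_const.mul (contDiff_id.pow k))
    set U : Set ℝ := u ⁻¹' Ioi 0 with hU
    have hUopen : IsOpen U := isOpen_Ioi.preimage hucd.continuous
    have h0U : (0 : ℝ) ∈ U := by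
      simp only [hU, mem_preimage, mem_Ioi, hu]
      rw [zero_pow (by omega)]
      norm_num
    refine ⟨U, hUopen, h0U, fun x => x * (u x) ^ (1 / (1 - a)), ?_, ?_⟩
    · apply ContDiffOn.mul contDiffOn_id
      intro x hx
      exact ((Real.contDiffAt_rpow_const_of_ne (ne_of_gt hx)).comp x
        hucd.contDiffAt).contDiffWithinAt
    · rintro x ⟨hxU, hx0⟩
      rcases eq_or_lt_of_le (mem_Ici.mp hx0) with h | h
      · simp [← h, hf0]
      · rw [hf x h]
        simp only [hu, ← hka]
        rw [Real.rpow_natCast]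
end

section
/- Let φ : (α,β) → (0,∞) be continuous and complete, with flow σ_s(x) := F^{−1}(F(x) + s) where F(x) := ∫_γ^x dt/φ(t). Let ψ : (α,β) → (0,∞) be differentiable and suppose the function C_{ψ,φ} := φψ′/ψ extends to a continuous function on [α,β]; set λ := C_{ψ,φ}(α) (the value of the continuous extension at α). Then for every s ∈ ℝ: lim_{t→α+} ψ(σ_s(t))/ψ(t) = e^{λ s}; equivalently, lim_{t→α+} ψ(t)/ψ(σ_s(t)) = e^{−λ s}. (The key identity is log(ψ(σ_s(t))/ψ(t)) = ∫_0^s C_{ψ,φ}(σ_τ(t)) dτ.) -/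
/-!
Along the flow, `(log ψ)' = ψ'/ψ = C_{ψ,φ} / φ`, so `log (ψ(σ_s t) / ψ t)` is the integral of
`C_{ψ,φ}` against the weight `dx/φ` over `[t, σ_s t]`, an interval of weight exactly
`F(σ_s t) - F t = s`. As `F` is increasing and onto `ℝ`, `F t → -∞` as `t → α⁺` and
`F⁻¹ y → α` as `y → -∞`, so both `t` and `σ_s t` tend to `α`. On the whole interval between
them `C_{ψ,φ}` is then close to `λ = C_{ψ,φ}(α)`, and the integral tends to `λ s`.
-/

open Real Set Filter Topology

open intervalIntegral MeasureTheory

theorem Filter.tendstoIxxClass_Icc_comap {α β : Type*} [Preorder α] [Preorder β] {f : α → β}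
    (hf : Monotone f) {l : Filter β} [h : TendstoIxxClass Icc l l] :
    TendstoIxxClass Icc (comap f l) (comap f l) := by
  refine ⟨tendsto_smallSets_iff.2 fun s hs => ?_⟩
  obtain ⟨t, ht, hts⟩ := mem_comap.1 hs
  rw [prod_comap_comap_eq]
  filter_upwards [(tendsto_smallSets_iff.1 h.tendsto_Ixx t ht).comap _] with p hp x hx
  exact hts (hp ⟨hf hx.1, hf hx.2⟩)

instance EI.ordConnected (α β : EReal) : (EI α β).OrdConnected :=
  ordConnected_Ioo.preimage_mono EReal.coe_strictMono.monotone

theorem abs_integral_sub_const_mul_le {f g : ℝ → ℝ} {a b c ε : ℝ}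
    (hf : IntervalIntegrable f volume a b) (hf0 : ∀ x ∈ uIcc a b, 0 ≤ f x)
    (hg : ∀ x ∈ uIcc a b, |g x - c| ≤ ε) :
    |∫ x in a..b, (g x - c) * f x| ≤ ε * |∫ x in a..b, f x| := by
  have hε : 0 ≤ ε := (abs_nonneg _).trans (hg a left_mem_uIcc)
  calc |∫ x in a..b, (g x - c) * f x| ≤ |∫ x in a..b, ε * f x| := by
        refine norm_integral_le_abs_of_norm_le (f := fun x => (g x - c) * f x)
          (ae_restrict_of_forall_mem measurableSet_uIoc fun x hx => ?_) (hf.const_mul ε)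
        have hx := uIoc_subset_uIcc hx
        rw [Real.norm_eq_abs, abs_mul, abs_of_nonneg (hf0 x hx)]
        exact mul_le_mul_of_nonneg_right (hg x hx) (hf0 x hx)
    _ = ε * |∫ x in a..b, f x| := by
        rw [intervalIntegral.integral_const_mul, abs_mul, abs_of_nonneg hε]

theorem tendsto_integral_mul_of_integral_eq {ι : Type*} {l : Filter ι} {L : Filter ℝ}
    [TendstoIxxClass Icc L L] {I : Set ℝ} (hI : I ∈ L) {f g : ℝ → ℝ} (hf : ContinuousOn f I)
    (hg : ContinuousOn g I) (hf0 : ∀ x ∈ I, 0 ≤ f x) {c : ℝ} (hgc : Tendsto g L (𝓝 c))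
    {u v : ι → ℝ} (hu : Tendsto u l L) (hv : Tendsto v l L) {s : ℝ}
    (hs : ∀ᶠ i in l, ∫ x in u i..v i, f x = s) :
    Tendsto (fun i => ∫ x in u i..v i, g x * f x) l (𝓝 (c * s)) := by
  refine Metric.tendsto_nhds.2 fun ε hε => ?_
  set δ := ε / (|s| + 1)
  have hδ : 0 < δ := by positivity
  have hclose : ∀ᶠ x in L, x ∈ I ∧ |g x - c| ≤ δ :=
    inter_mem hI (hgc.eventually (Metric.closedBall_mem_nhds c hδ))
  filter_upwards [tendsto_smallSets_iff.1 (hu.uIcc hv) _ hclose, hs] with i hsub hsi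
  have hfi : IntervalIntegrable f volume (u i) (v i) :=
    (hf.mono fun x hx => (hsub hx).1).intervalIntegrable
  have hgfi : IntervalIntegrable (fun x => g x * f x) volume (u i) (v i) :=
    ((hg.mul hf).mono fun x hx => (hsub hx).1).intervalIntegrable
  have hdiff : (∫ x in u i..v i, g x * f x) - c * s = ∫ x in u i..v i, (g x - c) * f x := by
    simp_rw [sub_mul]
    rw [integral_sub hgfi (hfi.const_mul c), intervalIntegral.integral_const_mul, hsi]
  rw [Real.dist_eq, hdiff]
  calc |∫ x in u i..v i, (g x - c) * f x| ≤ δ * |s| := by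
        rw [← hsi]
        exact abs_integral_sub_const_mul_le hfi (fun x hx => hf0 x (hsub hx).1)
          fun x hx => (hsub hx).2
    _ < δ * (|s| + 1) := by gcongr; linarith
    _ = ε := div_mul_cancel₀ ε (by positivity)

section Primitive

variable {I : Set ℝ} [I.OrdConnected] {f F : ℝ → ℝ} {γ : ℝ}

theorem sub_eq_integral_of_primitive (hf : ContinuousOn f I) (hγ : γ ∈ I)
    (hF : ∀ x, F x = ∫ t in γ..x, f t) {a b : ℝ} (ha : a ∈ I) (hb : b ∈ I) :
    F b - F a = ∫ t in a..b, f t := by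
  have hfi : ∀ {x}, x ∈ I → IntervalIntegrable f volume γ x := fun hx =>
    (hf.mono (OrdConnected.uIcc_subset ‹_› hγ hx)).intervalIntegrable
  rw [hF, hF, integral_interval_sub_left (hfi hb) (hfi ha)]

theorem monotoneOn_of_primitive (hf : ContinuousOn f I) (hf0 : ∀ x ∈ I, 0 ≤ f x) (hγ : γ ∈ I)
    (hF : ∀ x, F x = ∫ t in γ..x, f t) : MonotoneOn F I := by
  intro a ha b hb hab
  rw [← sub_nonneg, sub_eq_integral_of_primitive hf hγ hF ha hb]
  exact integral_nonneg hab fun x hx => hf0 x (OrdConnected.out ‹_› ha hb hx)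

end Primitive

theorem log_sub_log_eq_integral {I : Set ℝ} [I.OrdConnected] {ψ C : ℝ → ℝ}
    (hψd : ∀ x ∈ I, DifferentiableAt ℝ ψ x) (hψpos : ∀ x ∈ I, 0 < ψ x) (hC : ContinuousOn C I)
    (hCψ : ∀ x ∈ I, C x = deriv ψ x / ψ x) {a b : ℝ} (ha : a ∈ I) (hb : b ∈ I) :
    log (ψ b) - log (ψ a) = ∫ x in a..b, C x := by
  have hab := OrdConnected.uIcc_subset ‹_› ha hb
  refine (integral_eq_sub_of_hasDerivAt (f := fun x => log (ψ x)) (fun x hx => ?_)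
    (hC.mono hab).intervalIntegrable).symm
  rw [hCψ x (hab hx)]
  exact (hψd x (hab hx)).hasDerivAt.log (hψpos x (hab hx)).ne'

section RightNeighbourhood

variable {α β : EReal}

theorem EI_mem_comap_nhdsGT (hαβ : α < β) : EI α β ∈ comap Real.toEReal (𝓝[>] α) :=
  preimage_mem_comap (Ioo_mem_nhdsGT hαβ)

theorem ContinuousOn.tendsto_comap_nhdsGT {g : EReal → ℝ} (hg : ContinuousOn g (Icc α β))
    (hαβ : α < β) : Tendsto (fun x : ℝ => g x) (comap Real.toEReal (𝓝[>] α)) (𝓝 (g α)) := by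
  have hα : Tendsto Real.toEReal (comap Real.toEReal (𝓝[>] α)) (𝓝[Icc α β] α) := by
    rw [← nhdsWithin_Ioo_eq_nhdsGT hαβ]
    exact tendsto_comap.mono_right (nhdsWithin_mono _ Ioo_subset_Icc_self)
  exact (hg α ⟨le_rfl, hαβ.le⟩).tendsto.comp hα

instance : TendstoIxxClass Icc (comap Real.toEReal (𝓝[>] α)) (comap Real.toEReal (𝓝[>] α)) :=
  tendstoIxxClass_Icc_comap EReal.coe_strictMono.monotone

variable {F G : ℝ → ℝ}

theorem tendsto_comap_nhdsGT_atBot (hF : MonotoneOn F (EI α β)) (hG : ∀ y, G y ∈ EI α β)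
    (hFG : ∀ y, F (G y) = y) : Tendsto F (comap Real.toEReal (𝓝[>] α)) atBot := by
  refine tendsto_atBot.2 fun M => ?_
  have hαβ : α < β := (hG M).1.trans (hG M).2
  filter_upwards [EI_mem_comap_nhdsGT hαβ,
    preimage_mem_comap (Ioo_mem_nhdsGT (hG M).1)] with t ht htM
  rw [← hFG M]
  exact hF ht (hG M) (EReal.coe_le_coe_iff.1 htM.2.le)

theorem tendsto_atBot_comap_nhdsGT (hF : MonotoneOn F (EI α β)) (hG : ∀ y, G y ∈ EI α β)
    (hFG : ∀ y, F (G y) = y) : Tendsto G atBot (comap Real.toEReal (𝓝[>] α)) := by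
  have hαβ : α < β := (hG 0).1.trans (hG 0).2
  refine ((nhdsGT_basis_of_exists_gt ⟨β, hαβ⟩).comap _).tendsto_right_iff.2 fun u hu => ?_
  obtain ⟨x, hαx, hxu⟩ := EReal.lt_iff_exists_real_btwn.1 (lt_min hu hαβ)
  have hx : x ∈ EI α β := ⟨hαx, hxu.trans_le (min_le_right _ _)⟩
  filter_upwards [eventually_lt_atBot (F x)] with y hy
  have hyx : G y < x := by
    by_contra! hxy
    exact hy.not_ge (hFG y ▸ hF hx (hG y) hxy)
  exact ⟨(hG y).1, ((EReal.coe_lt_coe_iff.2 hyx).trans hxu).trans_le (min_le_left _ _)⟩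

end RightNeighbourhood

theorem psi_flow_limit_general (α β : EReal) (φ : ℝ → ℝ)
    (hφc : ContinuousOn φ (EI α β)) (hφpos : ∀ x ∈ EI α β, 0 < φ x)
    (γ : ℝ) (hγ : γ ∈ EI α β)
    (F : ℝ → ℝ) (hF : ∀ x, F x = ∫ t in γ..x, (φ t)⁻¹)
    (G : ℝ → ℝ) (hGmem : ∀ y, G y ∈ EI α β)
    (hFG : ∀ y, F (G y) = y)
    (ψ : ℝ → ℝ) (hψd : ∀ x ∈ EI α β, DifferentiableAt ℝ ψ x)
    (hψpos : ∀ x ∈ EI α β, 0 < ψ x)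
    (Cb : EReal → ℝ) (hCbc : ContinuousOn Cb (Set.Icc α β))
    (hCbI : ∀ x ∈ EI α β, Cb (x : EReal) = φ x * deriv ψ x / ψ x) :
    ∀ s : ℝ,
      Tendsto (fun t : ℝ => ψ (G (F t + s)) / ψ t)
        (comap Real.toEReal (𝓝[>] α)) (𝓝 (Real.exp (Cb α * s))) ∧
      Tendsto (fun t : ℝ => ψ t / ψ (G (F t + s)))
        (comap Real.toEReal (𝓝[>] α)) (𝓝 (Real.exp (-(Cb α * s)))) := by
  intro s
  have hαβ : α < β := (hGmem 0).1.trans (hGmem 0).2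
  have hEI := EI_mem_comap_nhdsGT hαβ
  have hinv : ContinuousOn (fun x => (φ x)⁻¹) (EI α β) := hφc.inv₀ fun x hx => (hφpos x hx).ne'
  have hC : ContinuousOn (fun x : ℝ => Cb x) (EI α β) :=
    hCbc.comp continuous_coe_real_ereal.continuousOn fun x hx => ⟨hx.1.le, hx.2.le⟩
  have hFmono : MonotoneOn F (EI α β) :=
    monotoneOn_of_primitive hinv (fun x hx => (inv_pos.2 (hφpos x hx)).le) hγ hF
  have hσ : Tendsto (fun t => G (F t + s)) (comap Real.toEReal (𝓝[>] α))
      (comap Real.toEReal (𝓝[>] α)) :=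
    (tendsto_atBot_comap_nhdsGT hFmono hGmem hFG).comp
      (tendsto_atBot_add_const_right _ s (tendsto_comap_nhdsGT_atBot hFmono hGmem hFG))
  have hlog : Tendsto (fun t => log (ψ (G (F t + s))) - log (ψ t))
      (comap Real.toEReal (𝓝[>] α)) (𝓝 (Cb α * s)) := by
    refine (tendsto_integral_mul_of_integral_eq hEI hinv hC
      (fun x hx => (inv_pos.2 (hφpos x hx)).le) (hCbc.tendsto_comap_nhdsGT hαβ) tendsto_id hσ
      ?_).congr' ?_
    · filter_upwards [hEI] with t ht
      rw [id, ← sub_eq_integral_of_primitive hinv hγ hF ht (hGmem _), hFG, add_sub_cancel_left]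
    · filter_upwards [hEI] with t ht
      refine (log_sub_log_eq_integral (C := fun x => Cb x * (φ x)⁻¹) hψd hψpos (hC.mul hinv)
        (fun x hx => ?_) ht (hGmem _)).symm
      rw [hCbI x hx]
      field_simp [(hφpos x hx).ne']
  have hratio : Tendsto (fun t => ψ (G (F t + s)) / ψ t)
      (comap Real.toEReal (𝓝[>] α)) (𝓝 (exp (Cb α * s))) := by
    refine (continuous_exp.tendsto _).comp hlog |>.congr' ?_
    filter_upwards [hEI] with t ht
    simp only [Function.comp, exp_sub, exp_log (hψpos t ht), exp_log (hψpos _ (hGmem _))]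
  refine ⟨hratio, ?_⟩
  simpa only [inv_div, exp_neg] using hratio.inv₀ (exp_ne_zero _)

/-- let `φ` be continuous, positive and complete on `(α,β)` with
`F(x) = ∫_γ^x dt/φ(t)` and flow `σ_s(t) = F⁻¹(F(t)+s) = G(F(t)+s)`.  Let `ψ` be
differentiable and positive on `(α,β)` such that `C_{ψ,φ} := φψ′/ψ` extends to a
continuous function `Cb` on `[α,β]`, and set `λ := Cb(α)`.  Then for every `s`,
`ψ(σ_s(t))/ψ(t) → e^{λs}` as `t → α⁺`; equivalently `ψ(t)/ψ(σ_s(t)) → e^{−λs}`. -/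
theorem psi_flow_limit (α β : EReal) (hαβ : α < β) (φ : ℝ → ℝ)
    (hφc : ContinuousOn φ (EI α β)) (hφpos : ∀ x ∈ EI α β, 0 < φ x)
    (γ : ℝ) (hγ : γ ∈ EI α β)
    (hcomp₁ : ¬ MeasureTheory.IntegrableOn (fun t => (φ t)⁻¹)
      {x : ℝ | α < (x : EReal) ∧ x < γ})
    (hcomp₂ : ¬ MeasureTheory.IntegrableOn (fun t => (φ t)⁻¹)
      {x : ℝ | γ < x ∧ (x : EReal) < β})
    (F : ℝ → ℝ) (hF : ∀ x, F x = ∫ t in γ..x, (φ t)⁻¹)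
    (G : ℝ → ℝ) (hGmem : ∀ y, G y ∈ EI α β)
    (hGF : ∀ x ∈ EI α β, G (F x) = x) (hFG : ∀ y, F (G y) = y)
    (ψ : ℝ → ℝ) (hψd : ∀ x ∈ EI α β, DifferentiableAt ℝ ψ x)
    (hψpos : ∀ x ∈ EI α β, 0 < ψ x)
    (Cb : EReal → ℝ) (hCbc : ContinuousOn Cb (Set.Icc α β))
    (hCbI : ∀ x ∈ EI α β, Cb (x : EReal) = φ x * deriv ψ x / ψ x) :
    ∀ s : ℝ,
      Tendsto (fun t : ℝ => ψ (G (F t + s)) / ψ t)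
        (comap Real.toEReal (𝓝[>] α)) (𝓝 (Real.exp (Cb α * s))) ∧
      Tendsto (fun t : ℝ => ψ t / ψ (G (F t + s)))
        (comap Real.toEReal (𝓝[>] α)) (𝓝 (Real.exp (-(Cb α * s)))) :=
  psi_flow_limit_general α β φ hφc hφpos γ hγ F hF G hGmem hFG ψ hψd hψpos Cb hCbc hCbI
end
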